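/- Let A(ξ) be the 4×4 matrix with rows (0, -iξ₁, -iξ₂, -iξ₃), (-iξ₁, 0, 1, 0), (-iξ₂, -1, 0, 0), (-iξ₃, 0, 0, 0). Then the characteristic polynomial of A(ξ) factors so that its eigenvalues are exactly ±iλ⁺(ξ) and ±iλ⁻(ξ), where λ^±(ξ) = (1/2)(√(|ξ|² + 2ξ₃ + 1) ± √(|ξ|² - 2ξ₃ + 1)). -/

import Mathlib

set_option maxHeartbeats 1000000

open Matrix Complex Polynomial

noncomputable def Amat (ξ : Fin 3 → ℝ) : Matrix (Fin 4) (Fin 4) ℂ :=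
  !![0, -Complex.I * (ξ 0 : ℂ), -Complex.I * (ξ 1 : ℂ), -Complex.I * (ξ 2 : ℂ);
     -Complex.I * (ξ 0 : ℂ), 0, 1, 0;
     -Complex.I * (ξ 1 : ℂ), -1, 0, 0;
     -Complex.I * (ξ 2 : ℂ), 0, 0, 0]

noncomputable def lamP (ξ : Fin 3 → ℝ) : ℝ :=
  (Real.sqrt (ξ 0 ^ 2 + ξ 1 ^ 2 + ξ 2 ^ 2 + 2 * ξ 2 + 1) +
    Real.sqrt (ξ 0 ^ 2 + ξ 1 ^ 2 + ξ 2 ^ 2 - 2 * ξ 2 + 1)) / 2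

noncomputable def lamM (ξ : Fin 3 → ℝ) : ℝ :=
  (Real.sqrt (ξ 0 ^ 2 + ξ 1 ^ 2 + ξ 2 ^ 2 + 2 * ξ 2 + 1) -
    Real.sqrt (ξ 0 ^ 2 + ξ 1 ^ 2 + ξ 2 ^ 2 - 2 * ξ 2 + 1)) / 2

lemma my_det_fin_four {R : Type*} [CommRing R] (M : Matrix (Fin 4) (Fin 4) R) :
    M.det =
      M 0 0 * (M 1 1 * (M 2 2 * M 3 3 - M 2 3 * M 3 2) - M 1 2 * (M 2 1 * M 3 3 - M 2 3 * M 3 1)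
        + M 1 3 * (M 2 1 * M 3 2 - M 2 2 * M 3 1))
      - M 0 1 * (M 1 0 * (M 2 2 * M 3 3 - M 2 3 * M 3 2) - M 1 2 * (M 2 0 * M 3 3 - M 2 3 * M 3 0)
        + M 1 3 * (M 2 0 * M 3 2 - M 2 2 * M 3 0))
      + M 0 2 * (M 1 0 * (M 2 1 * M 3 3 - M 2 3 * M 3 1) - M 1 1 * (M 2 0 * M 3 3 - M 2 3 * M 3 0)
        + M 1 3 * (M 2 0 * M 3 1 - M 2 1 * M 3 0))
      - M 0 3 * (M 1 0 * (M 2 1 * M 3 2 - M 2 2 * M 3 1) - M 1 1 * (M 2 0 * M 3 2 - M 2 2 * M 3 0)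
        + M 1 2 * (M 2 0 * M 3 1 - M 2 1 * M 3 0)) := by
  rw [Matrix.det_succ_row_zero]
  simp [Fin.sum_univ_succ, Matrix.det_fin_three, Fin.succAbove, Matrix.submatrix_apply,
    show (Fin.succ 2 : Fin 4) = 3 from rfl, show Fin.castSucc 2 = (2 : Fin 4) from rfl]
  ring

lemma Amat_charpoly (ξ : Fin 3 → ℝ) : (Amat ξ).charpoly =
    X^4 + C ((ξ 0:ℂ)^2 + (ξ 1:ℂ)^2 + (ξ 2:ℂ)^2 + 1) * X^2 + C ((ξ 2:ℂ)^2) := by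
  have hI : (C Complex.I : Polynomial ℂ)^2 = -1 := by
    rw [← C_pow, Complex.I_sq]; simp
  rw [Matrix.charpoly, my_det_fin_four]
  simp [charmatrix_apply, Amat, Matrix.diagonal_apply, Matrix.one_apply,
    Matrix.vecHead, Matrix.vecTail]
  ring_nf
  linear_combination (-(X^2*(C (ξ 0:ℂ)^2 + C (ξ 1:ℂ)^2 + C (ξ 2:ℂ)^2) + C (ξ 2:ℂ)^2)) * hI

theorem Amat_charpoly_factors (ξ : Fin 3 → ℝ) :
    (Amat ξ).charpoly =
      (X - C (Complex.I * (lamP ξ : ℂ))) * (X + C (Complex.I * (lamP ξ : ℂ))) *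
      (X - C (Complex.I * (lamM ξ : ℂ))) * (X + C (Complex.I * (lamM ξ : ℂ))) := by
  have ha : Real.sqrt (ξ 0 ^ 2 + ξ 1 ^ 2 + ξ 2 ^ 2 + 2 * ξ 2 + 1) ^ 2
      = ξ 0 ^ 2 + ξ 1 ^ 2 + ξ 2 ^ 2 + 2 * ξ 2 + 1 := by
    rw [Real.sq_sqrt]; nlinarith [sq_nonneg (ξ 0), sq_nonneg (ξ 1), sq_nonneg (ξ 2 + 1)]
  have hb : Real.sqrt (ξ 0 ^ 2 + ξ 1 ^ 2 + ξ 2 ^ 2 - 2 * ξ 2 + 1) ^ 2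
      = ξ 0 ^ 2 + ξ 1 ^ 2 + ξ 2 ^ 2 - 2 * ξ 2 + 1 := by
    rw [Real.sq_sqrt]; nlinarith [sq_nonneg (ξ 0), sq_nonneg (ξ 1), sq_nonneg (ξ 2 - 1)]
  have hsum : (lamP ξ)^2 + (lamM ξ)^2 = ξ 0 ^ 2 + ξ 1 ^ 2 + ξ 2 ^ 2 + 1 := by
    unfold lamP lamM
    linear_combination ha / 2 + hb / 2
  have hprod : lamP ξ * lamM ξ = ξ 2 := by
    unfold lamP lamM
    linear_combination ha / 4 - hb / 4
  have hA : ((lamP ξ : ℂ))^2 + ((lamM ξ : ℂ))^2 = (ξ 0:ℂ)^2 + (ξ 1:ℂ)^2 + (ξ 2:ℂ)^2 + 1 := by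
    exact_mod_cast congrArg (Complex.ofReal) hsum
  have hB : ((lamP ξ : ℂ))^2 * ((lamM ξ : ℂ))^2 = (ξ 2:ℂ)^2 := by
    have := congrArg (Complex.ofReal) hprod
    push_cast at this
    calc ((lamP ξ : ℂ))^2 * ((lamM ξ : ℂ))^2 = ((lamP ξ : ℂ) * (lamM ξ : ℂ))^2 := by ring
      _ = (ξ 2:ℂ)^2 := by rw [this]
  have hu : (C (Complex.I * (lamP ξ : ℂ)))^2 = -C ((lamP ξ : ℂ)^2) := by
    rw [← C_pow, show (Complex.I * (lamP ξ : ℂ))^2 = -((lamP ξ : ℂ)^2) by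
      rw [mul_pow, Complex.I_sq]; ring]
    simp
  have hv : (C (Complex.I * (lamM ξ : ℂ)))^2 = -C ((lamM ξ : ℂ)^2) := by
    rw [← C_pow, show (Complex.I * (lamM ξ : ℂ))^2 = -((lamM ξ : ℂ)^2) by
      rw [mul_pow, Complex.I_sq]; ring]
    simp
  rw [Amat_charpoly ξ]
  have hAC : C ((ξ 0:ℂ)^2 + (ξ 1:ℂ)^2 + (ξ 2:ℂ)^2 + 1)
      = C ((lamP ξ : ℂ)^2) + C ((lamM ξ : ℂ)^2) := by
    rw [← map_add, hA]
  have hBC : C ((ξ 2:ℂ)^2) = C ((lamP ξ : ℂ)^2) * C ((lamM ξ : ℂ)^2) := by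
    rw [← Polynomial.C_mul, hB]
  rw [hAC, hBC]
  linear_combination (X^2 + C ((lamM ξ : ℂ)^2)) * hu +
    (X^2 - (C (Complex.I * (lamP ξ : ℂ)))^2) * hv
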